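/- For every n ≥ 1 and every x ≥ 0, the second central moment Ω₂ := K_n^μ((ξ−x)²; x) satisfies Ω₂ = (1 + 2 e_μ(−nx)[μ Q(−1) + Q'(1) − (Λ_μ Q)(1)]/(Q(1) e_μ(nx))) · (x/n) + e_μ(−nx)(Λ_μ Q)(1)/(Q(1) n² e_μ(nx)) + [2Q''(1) − (Λ_μ Q)'(1) − (Λ_μ Q')(1) + Q'(1) − 2μ Q'(−1)](e_μ(nx) − e_μ(−nx))/(Q(1) n² e_μ(nx)) + [(Λ_μ² Q)(1) + 2μ (Λ_μ Q)(−1)]/(Q(1) n²). -/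

import Mathlib

open scoped BigOperators

/-- The Dunkl coefficients γ_μ(i). -/
noncomputable def gammaMu (μ : ℝ) (i : ℕ) : ℝ :=
  if Even i then
    2 ^ i * (Nat.factorial (i / 2)) *
      Real.Gamma (((i / 2 : ℕ) : ℝ) + μ + 1 / 2) / Real.Gamma (μ + 1 / 2)
  else
    2 ^ i * (Nat.factorial (i / 2)) *
      Real.Gamma (((i / 2 : ℕ) : ℝ) + μ + 3 / 2) / Real.Gamma (μ + 1 / 2)

/-- θ_i = 0 if i is even, 1 if i is odd. -/
noncomputable def thetaFn (i : ℕ) : ℝ := if Even i then 0 else 1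

/-- The Dunkl exponential e_μ(x) = Σ x^i / γ_μ(i). -/
noncomputable def dunklExp (μ : ℝ) (x : ℝ) : ℝ := ∑' i : ℕ, x ^ i / gammaMu μ i

/-- The Dunkl operator (Λ_μ f)(x) = f'(x) + μ (f(x) - f(-x)) / x. -/
noncomputable def dunklOp (μ : ℝ) (f : ℝ → ℝ) (x : ℝ) : ℝ :=
  deriv f x + μ * (f x - f (-x)) / x

/-- Q(t) = Σ c_i t^i / γ_μ(i). -/
noncomputable def Qf (μ : ℝ) (c : ℕ → ℝ) (t : ℝ) : ℝ := ∑' i : ℕ, c i * t ^ i / gammaMu μ i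

/-- The Dunkl–Appell polynomials q_i(x) = Σ_{j=0}^i (γ_μ(i)/(γ_μ(j)γ_μ(i-j))) c_{i-j} x^j. -/
noncomputable def qPoly (μ : ℝ) (c : ℕ → ℝ) (i : ℕ) (x : ℝ) : ℝ :=
  ∑ j ∈ Finset.range (i + 1),
    gammaMu μ i / (gammaMu μ j * gammaMu μ (i - j)) * c (i - j) * x ^ j

/-- The operators K_n^μ(f;x). -/
noncomputable def Kop (μ : ℝ) (c : ℕ → ℝ) (n : ℕ) (f : ℝ → ℝ) (x : ℝ) : ℝ :=
  1 / (Qf μ c 1 * dunklExp μ (n * x)) *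
    ∑' i : ℕ, qPoly μ c i (n * x) / gammaMu μ i * f (((i : ℝ) + 2 * μ * thetaFn i) / n)

/-!
Put `y = n x` and `b_i = i + 2μθ_i`. Since `q_i(y)/γ_μ(i)` is the Cauchy product of the sequences
`y^j/γ_μ(j)` and `c_k/γ_μ(k)`, and `b_{j+k} = b_j + b_k - 4μθ_jθ_k`, expanding `(b_{j+k} - y)²`
splits the moment into a sum of products of a series in `j` and a series in `k`.
The `j`-series are Dunkl exponentials: the recursion `γ_μ(j+1) = b_{j+1} γ_μ(j)` turns a factor
`b_j` into a shift of the series, which gives for instance `∑ (b_j - y) y^j/γ_μ(j) = 0` and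
`∑ (b_j - y)² y^j/γ_μ(j) = y e_μ(y) + 2μ y e_μ(-y)`.
The `k`-series are combinations of `Q`, `Q'`, `Q''` at `±1` (differentiating the power series of
`Q` termwise), and these are also the values of the Dunkl operators occurring in the formula.
-/

open Finset

section PowerSeries

/-- The truncated exponent `k - m` is harmless because `k.descFactorial m = 0` for `k < m`. -/
noncomputable def termwiseDeriv (a : ℕ → ℝ) (m : ℕ) (t : ℝ) : ℝ :=
  ∑' k, a k * (k.descFactorial m * t ^ (k - m))

lemma abs_descFactorial_mul_pow_le {m k : ℕ} {s R : ℝ} (hR : 1 ≤ R) (hs : |s| ≤ R) :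
    |(k.descFactorial m : ℝ) * s ^ (k - m)| ≤ (2 ^ m * R) ^ k := by
  rw [abs_mul, abs_pow, Nat.abs_cast, mul_pow, ← pow_mul, mul_comm m k, pow_mul]
  gcongr
  · calc (k.descFactorial m : ℝ) ≤ (k : ℝ) ^ m := by exact_mod_cast Nat.descFactorial_le_pow k m
      _ ≤ (2 ^ k : ℝ) ^ m := by gcongr; exact_mod_cast (Nat.lt_two_pow_self (n := k)).le
  · exact (pow_le_pow_left₀ (abs_nonneg s) hs _).trans (pow_le_pow_right₀ hR (Nat.sub_le k m))

variable {a : ℕ → ℝ}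

lemma norm_termwiseDeriv_term_le (m k : ℕ) {s R : ℝ} (hR : 1 ≤ R) (hs : |s| ≤ R) :
    ‖a k * (k.descFactorial m * s ^ (k - m))‖ ≤ ‖a k * (2 ^ m * R) ^ k‖ := by
  have hB : 0 ≤ 2 ^ m * R := by positivity
  rw [norm_mul, norm_mul (a k), Real.norm_eq_abs (_ * _), Real.norm_of_nonneg (pow_nonneg hB k)]
  exact mul_le_mul_of_nonneg_left (abs_descFactorial_mul_pow_le hR hs) (norm_nonneg _)

variable (ha : ∀ r : ℝ, Summable fun k => ‖a k * r ^ k‖)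
include ha

lemma hasSum_termwiseDeriv (m : ℕ) (t : ℝ) :
    HasSum (fun k => a k * (k.descFactorial m * t ^ (k - m))) (termwiseDeriv a m t) :=
  (Summable.of_norm_bounded (ha (2 ^ m * (|t| + 1)))
    fun k => norm_termwiseDeriv_term_le m k (by linarith [abs_nonneg t]) (by linarith)).hasSum

lemma hasDerivAt_termwiseDeriv (m : ℕ) (t : ℝ) :
    HasDerivAt (termwiseDeriv a m) (termwiseDeriv a (m + 1) t) t := by
  set R := |t| + 1
  have hR : 1 ≤ R := by linarith [abs_nonneg t]
  have hball : ∀ y ∈ Metric.ball (0 : ℝ) R, |y| ≤ R := fun y hy => by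
    rw [Metric.mem_ball, Real.dist_eq, sub_zero] at hy
    exact hy.le
  refine hasDerivAt_tsum_of_isPreconnected (ha (2 ^ (m + 1) * R)) Metric.isOpen_ball
    (convex_ball 0 R).isPreconnected (fun k y _ => ?_)
    (fun k y hy => norm_termwiseDeriv_term_le (m + 1) k hR (hball y hy))
    (y₀ := t) (by simp [R]) (hasSum_termwiseDeriv ha m t).summable (by simp [R])
  have hdesc : (k.descFactorial (m + 1) : ℝ) = (k.descFactorial m : ℝ) * (k - m : ℕ) := by
    rw [Nat.descFactorial_succ]; push_cast; ring
  have h := (hasDerivAt_pow (k - m) y).const_mul (a k * k.descFactorial m)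
  simp only [mul_assoc] at h
  exact h.congr_deriv (by rw [hdesc, Nat.sub_add_eq]; ring)

lemma deriv_termwiseDeriv (m : ℕ) : deriv (termwiseDeriv a m) = termwiseDeriv a (m + 1) :=
  funext fun t => (hasDerivAt_termwiseDeriv ha m t).deriv

end PowerSeries

lemma HasSum.sum_range_mul {f g : ℕ → ℝ} {s t : ℝ} (hf : HasSum f s) (hg : HasSum g t) :
    HasSum (fun n => ∑ k ∈ range (n + 1), f k * g (n - k)) (s * t) := by
  rw [← hf.tsum_eq, ← hg.tsum_eq]
  exact hasSum_sum_range_mul_of_summable_norm (summable_norm_iff.2 hf.summable)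
    (summable_norm_iff.2 hg.summable)

lemma hasDerivAt_dunklOp (μ : ℝ) {f f' : ℝ → ℝ} {f'' x : ℝ} (hx : x ≠ 0)
    (hf : ∀ y, HasDerivAt f (f' y) y) (hf' : HasDerivAt f' f'' x) :
    HasDerivAt (dunklOp μ f)
      (f'' + μ * ((f' x + f' (-x)) * x - (f x - f (-x))) / x ^ 2) x := by
  have hderiv : deriv f = f' := funext fun y => (hf y).deriv
  have hneg : HasDerivAt (fun y => f (-y)) (-f' (-x)) x := by
    simpa [Function.comp_def] using (hf (-x)).comp x (hasDerivAt_neg x)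
  unfold dunklOp
  rw [hderiv]
  refine (hf'.fun_add ((((hf x).fun_sub hneg).const_mul μ).fun_div (hasDerivAt_id' x) hx)
    ).congr_deriv ?_
  ring

/-- `Λ_μ t^k = dunklIndex μ k * t^(k-1)`, and the nodes of `K_n^μ` are `dunklIndex μ i / n`. -/
noncomputable def dunklIndex (μ : ℝ) (k : ℕ) : ℝ := k + 2 * μ * thetaFn k

lemma thetaFn_eq (k : ℕ) : thetaFn k = (1 - (-1) ^ k) / 2 := by
  unfold thetaFn
  split_ifs with h
  · rw [h.neg_one_pow]; ring
  · rw [(Nat.not_even_iff_odd.1 h).neg_one_pow]; ring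

lemma thetaFn_mul_self (k : ℕ) : thetaFn k * thetaFn k = thetaFn k := by
  unfold thetaFn; split_ifs <;> norm_num

lemma thetaFn_nonneg (k : ℕ) : 0 ≤ thetaFn k := by
  unfold thetaFn; split_ifs <;> norm_num

lemma thetaFn_succ (k : ℕ) : thetaFn (k + 1) = 1 - thetaFn k := by
  rw [thetaFn_eq, thetaFn_eq, pow_succ]; ring

lemma dunklIndex_zero (μ : ℝ) : dunklIndex μ 0 = 0 := by
  simp [dunklIndex, thetaFn]

lemma dunklIndex_add (μ : ℝ) (j k : ℕ) :
    dunklIndex μ (j + k) = dunklIndex μ j + dunklIndex μ k - 4 * μ * thetaFn j * thetaFn k := by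
  simp only [dunklIndex, thetaFn_eq, pow_add]; push_cast; ring

lemma dunklIndex_succ (μ : ℝ) (k : ℕ) :
    dunklIndex μ (k + 1) = dunklIndex μ k + 1 + 2 * μ - 4 * μ * thetaFn k := by
  simp only [dunklIndex, thetaFn_succ]; push_cast; ring

lemma dunklIndex_succ_pos {μ : ℝ} (hμ : 0 ≤ μ) (k : ℕ) : 0 < dunklIndex μ (k + 1) := by
  have := thetaFn_nonneg (k + 1)
  unfold dunklIndex; positivity

section GammaMu

variable {μ : ℝ} (hμ : 0 ≤ μ)
include hμ

lemma gammaMu_pos (k : ℕ) : 0 < gammaMu μ k := by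
  unfold gammaMu
  split_ifs
  · have := Real.Gamma_pos_of_pos (s := ((k / 2 : ℕ) : ℝ) + μ + 1 / 2) (by positivity)
    have := Real.Gamma_pos_of_pos (s := μ + 1 / 2) (by positivity)
    positivity
  · have := Real.Gamma_pos_of_pos (s := ((k / 2 : ℕ) : ℝ) + μ + 3 / 2) (by positivity)
    have := Real.Gamma_pos_of_pos (s := μ + 1 / 2) (by positivity)
    positivity

lemma gammaMu_zero : gammaMu μ 0 = 1 := by
  have := (Real.Gamma_pos_of_pos (s := μ + 1 / 2) (by positivity)).ne'
  simp_all [gammaMu]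

lemma gammaMu_succ (k : ℕ) : gammaMu μ (k + 1) = dunklIndex μ (k + 1) * gammaMu μ k := by
  rcases Nat.even_or_odd k with ⟨m, rfl⟩ | ⟨m, rfl⟩
  · have hodd : ¬Even (m + m + 1) := by simp
    have hz : ((m : ℝ) + μ + 1 / 2) ≠ 0 := by positivity
    rw [gammaMu, gammaMu, if_neg hodd, if_pos ⟨m, rfl⟩, show (m + m + 1) / 2 = m by omega,
      show (m + m) / 2 = m by omega, dunklIndex, thetaFn, if_neg hodd,
      show (m : ℝ) + μ + 3 / 2 = (m + μ + 1 / 2) + 1 by ring, Real.Gamma_add_one hz]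
    push_cast
    ring
  · have heven : Even (2 * m + 1 + 1) := ⟨m + 1, by omega⟩
    have hodd : ¬Even (2 * m + 1) := by simp
    rw [gammaMu, gammaMu, if_pos heven, if_neg hodd, show (2 * m + 1 + 1) / 2 = m + 1 by omega,
      show (2 * m + 1) / 2 = m by omega, dunklIndex, thetaFn, if_pos heven]
    push_cast [Nat.factorial_succ]
    ring_nf

lemma factorial_le_gammaMu (k : ℕ) : (k.factorial : ℝ) ≤ gammaMu μ k := by
  induction k with
  | zero => simp [gammaMu_zero hμ]
  | succ k ih =>
    have hk : (k : ℝ) + 1 ≤ dunklIndex μ (k + 1) := by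
      have := thetaFn_nonneg (k + 1)
      unfold dunklIndex; push_cast; nlinarith
    rw [gammaMu_succ hμ, Nat.factorial_succ]
    push_cast
    exact mul_le_mul hk ih (by positivity) (dunklIndex_succ_pos hμ k).le

end GammaMu

lemma HasSum.congr_of_eq {f g : ℕ → ℝ} {a b : ℝ} (h : HasSum f a) (hfg : ∀ j, g j = f j)
    (hab : a = b) : HasSum g b :=
  hab ▸ h.congr_fun hfg

section DunklExp

variable {μ : ℝ} (hμ : 0 ≤ μ)
include hμ

lemma hasSum_dunklExp (t : ℝ) : HasSum (fun j => t ^ j / gammaMu μ j) (dunklExp μ t) := by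
  refine (Summable.of_norm_bounded (Real.summable_pow_div_factorial |t|) fun j => ?_).hasSum
  rw [norm_div, norm_pow, Real.norm_eq_abs, Real.norm_of_nonneg (gammaMu_pos hμ j).le]
  exact div_le_div_of_nonneg_left (by positivity) (by positivity) (factorial_le_gammaMu hμ j)

lemma dunklExp_pos {t : ℝ} (ht : 0 ≤ t) : 0 < dunklExp μ t :=
  (hasSum_dunklExp hμ t).summable.tsum_pos (fun j => div_nonneg (pow_nonneg ht j)
    (gammaMu_pos hμ j).le) 0 (by simp [gammaMu_zero hμ])

lemma hasSum_pow_div_gammaMu_mul_thetaFn (t : ℝ) :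
    HasSum (fun j => t ^ j / gammaMu μ j * thetaFn j) ((dunklExp μ t - dunklExp μ (-t)) / 2) :=
  ((hasSum_dunklExp hμ t).sub (hasSum_dunklExp hμ (-t))).div_const 2 |>.congr_fun
    fun j => by rw [thetaFn_eq, neg_pow]; ring

lemma HasSum.pow_div_gammaMu_mul_dunklIndex {t s : ℝ} {g : ℕ → ℝ}
    (h : HasSum (fun j => t ^ j / gammaMu μ j * g (j + 1)) s) :
    HasSum (fun j => t ^ j / gammaMu μ j * (dunklIndex μ j * g j)) (t * s) := by
  rw [← hasSum_nat_add_iff' 1]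
  refine (h.mul_left t).congr_of_eq (fun j => ?_) (by simp [dunklIndex_zero])
  have := (dunklIndex_succ_pos hμ j).ne'
  rw [gammaMu_succ hμ, pow_succ]
  field_simp

lemma hasSum_pow_div_gammaMu_mul_dunklIndex (t : ℝ) :
    HasSum (fun j => t ^ j / gammaMu μ j * dunklIndex μ j) (t * dunklExp μ t) :=
  ((hasSum_dunklExp hμ t).mul_right 1 |>.pow_div_gammaMu_mul_dunklIndex hμ (g := fun _ => 1)
    ).congr_of_eq (fun j => by ring) (by ring)

lemma hasSum_pow_div_gammaMu_mul_dunklIndex_sub (t : ℝ) :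
    HasSum (fun j => t ^ j / gammaMu μ j * (dunklIndex μ j - t)) 0 :=
  ((hasSum_pow_div_gammaMu_mul_dunklIndex hμ t).sub ((hasSum_dunklExp hμ t).mul_left t)).congr_of_eq
    (fun j => by ring) (by ring)

lemma hasSum_pow_div_gammaMu_mul_thetaFn_mul_dunklIndex_sub (t : ℝ) :
    HasSum (fun j => t ^ j / gammaMu μ j * (thetaFn j * (dunklIndex μ j - t)))
      (t * dunklExp μ (-t)) := by
  have hshift : HasSum (fun j => t ^ j / gammaMu μ j * thetaFn (j + 1))
      (dunklExp μ t - (dunklExp μ t - dunklExp μ (-t)) / 2) :=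
    ((hasSum_dunklExp hμ t).sub (hasSum_pow_div_gammaMu_mul_thetaFn hμ t)).congr_fun
      fun j => by rw [thetaFn_succ]; ring
  exact ((hshift.pow_div_gammaMu_mul_dunklIndex hμ).sub
    ((hasSum_pow_div_gammaMu_mul_thetaFn hμ t).mul_left t)).congr_of_eq
    (fun j => by ring) (by ring)

lemma hasSum_pow_div_gammaMu_mul_dunklIndex_sub_sq (t : ℝ) :
    HasSum (fun j => t ^ j / gammaMu μ j * (dunklIndex μ j - t) ^ 2)
      (t * dunklExp μ t + 2 * μ * t * dunklExp μ (-t)) := by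
  have hshift : HasSum (fun j => t ^ j / gammaMu μ j * dunklIndex μ (j + 1))
      (t * dunklExp μ t + dunklExp μ t * (1 + 2 * μ) -
        (dunklExp μ t - dunklExp μ (-t)) / 2 * (4 * μ)) :=
    (((hasSum_pow_div_gammaMu_mul_dunklIndex hμ t).add
      ((hasSum_dunklExp hμ t).mul_right (1 + 2 * μ))).sub
      ((hasSum_pow_div_gammaMu_mul_thetaFn hμ t).mul_right (4 * μ))).congr_fun
      fun j => by rw [dunklIndex_succ]; ring
  exact (((hshift.pow_div_gammaMu_mul_dunklIndex hμ).sub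
    ((hasSum_pow_div_gammaMu_mul_dunklIndex hμ t).mul_left (2 * t))).add
    ((hasSum_dunklExp hμ t).mul_left (t ^ 2))).congr_of_eq (fun j => by ring) (by ring)

end DunklExp

lemma neg_one_pow_pred_mul_natCast (k : ℕ) : (-1 : ℝ) ^ (k - 1) * k = -((-1) ^ k * k) := by
  cases k with
  | zero => simp
  | succ k => rw [Nat.add_sub_cancel, pow_succ]; ring

lemma neg_one_pow_sq (k : ℕ) : ((-1 : ℝ) ^ k) ^ 2 = 1 := by
  rw [← pow_mul, mul_comm, pow_mul, neg_one_sq, one_pow]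

section WeightedCoefficients

variable {a : ℕ → ℝ} (μ : ℝ) (ha : ∀ r : ℝ, Summable fun k => ‖a k * r ^ k‖)
include ha

omit μ in
lemma hasSum_termwiseDeriv_zero_one : HasSum a (termwiseDeriv a 0 1) :=
  (hasSum_termwiseDeriv ha 0 1).congr_fun fun k => by simp

omit μ in
lemma hasSum_mul_thetaFn :
    HasSum (fun k => a k * thetaFn k) ((termwiseDeriv a 0 1 - termwiseDeriv a 0 (-1)) / 2) :=
  ((hasSum_termwiseDeriv ha 0 1).sub (hasSum_termwiseDeriv ha 0 (-1))).div_const 2 |>.congr_fun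
    fun k => by
      simp only [thetaFn_eq, Nat.descFactorial_zero, Nat.sub_zero, one_pow]
      push_cast; ring

lemma hasSum_mul_dunklIndex :
    HasSum (fun k => a k * dunklIndex μ k)
      (termwiseDeriv a 1 1 + μ * (termwiseDeriv a 0 1 - termwiseDeriv a 0 (-1))) :=
  ((hasSum_termwiseDeriv ha 1 1).add (((hasSum_termwiseDeriv ha 0 1).sub
    (hasSum_termwiseDeriv ha 0 (-1))).mul_left μ)).congr_fun fun k => by
      simp only [dunklIndex, thetaFn_eq, Nat.descFactorial_zero, Nat.descFactorial_one,
        Nat.sub_zero, one_pow]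
      push_cast; ring

lemma hasSum_mul_thetaFn_mul_dunklIndex :
    HasSum (fun k => a k * (thetaFn k * dunklIndex μ k))
      ((termwiseDeriv a 1 1 + termwiseDeriv a 1 (-1)) / 2 +
        μ * (termwiseDeriv a 0 1 - termwiseDeriv a 0 (-1))) :=
  ((((hasSum_termwiseDeriv ha 1 1).add (hasSum_termwiseDeriv ha 1 (-1))).div_const 2).add
    (((hasSum_termwiseDeriv ha 0 1).sub (hasSum_termwiseDeriv ha 0 (-1))).mul_left μ)).congr_fun
    fun k => by
      simp only [dunklIndex, thetaFn_eq, Nat.descFactorial_zero, Nat.descFactorial_one,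
        Nat.sub_zero, one_pow]
      push_cast
      linear_combination (a k * μ / 2) * neg_one_pow_sq k -
        (a k / 2) * neg_one_pow_pred_mul_natCast k

lemma hasSum_mul_dunklIndex_sq :
    HasSum (fun k => a k * dunklIndex μ k ^ 2)
      (termwiseDeriv a 2 1 + termwiseDeriv a 1 1 +
        2 * μ * (termwiseDeriv a 1 1 + termwiseDeriv a 1 (-1)) +
        2 * μ ^ 2 * (termwiseDeriv a 0 1 - termwiseDeriv a 0 (-1))) :=
  ((((hasSum_termwiseDeriv ha 2 1).add (hasSum_termwiseDeriv ha 1 1)).add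
    (((hasSum_termwiseDeriv ha 1 1).add (hasSum_termwiseDeriv ha 1 (-1))).mul_left (2 * μ))).add
    (((hasSum_termwiseDeriv ha 0 1).sub (hasSum_termwiseDeriv ha 0 (-1))).mul_left (2 * μ ^ 2))
    ).congr_fun fun k => by
      simp only [dunklIndex, thetaFn_eq, Nat.descFactorial_zero, Nat.descFactorial_one,
        Nat.cast_descFactorial_two, Nat.sub_zero, one_pow]
      push_cast
      linear_combination (a k * μ ^ 2) * neg_one_pow_sq k -
        (2 * μ * a k) * neg_one_pow_pred_mul_natCast k

end WeightedCoefficients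

section CauchyProduct

variable {μ : ℝ} (hμ : 0 ≤ μ)
include hμ

lemma qPoly_div_gammaMu (c : ℕ → ℝ) (i : ℕ) (y : ℝ) :
    qPoly μ c i y / gammaMu μ i =
      ∑ j ∈ range (i + 1), y ^ j / gammaMu μ j * (c (i - j) / gammaMu μ (i - j)) := by
  rw [qPoly, sum_div]
  refine sum_congr rfl fun j _ => ?_
  have := (gammaMu_pos hμ i).ne'
  field_simp

lemma hasSum_sum_range_mul_dunklIndex_sub_sq (y : ℝ) {v : ℕ → ℝ} {s₀ sθ sb sθb sb2 : ℝ}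
    (h₀ : HasSum v s₀) (hθ : HasSum (fun k => v k * thetaFn k) sθ)
    (hb : HasSum (fun k => v k * dunklIndex μ k) sb)
    (hθb : HasSum (fun k => v k * (thetaFn k * dunklIndex μ k)) sθb)
    (hb2 : HasSum (fun k => v k * dunklIndex μ k ^ 2) sb2) :
    HasSum (fun i => ∑ j ∈ range (i + 1),
        y ^ j / gammaMu μ j * v (i - j) * (dunklIndex μ i - y) ^ 2)
      ((y * dunklExp μ y + 2 * μ * y * dunklExp μ (-y)) * s₀ + dunklExp μ y * sb2 +
        8 * μ ^ 2 * (dunklExp μ y - dunklExp μ (-y)) * sθ - 8 * μ * y * dunklExp μ (-y) * sθ -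
        4 * μ * (dunklExp μ y - dunklExp μ (-y)) * sθb) := by
  have h := (((((hasSum_pow_div_gammaMu_mul_dunklIndex_sub_sq hμ y).sum_range_mul h₀).add
    ((hasSum_dunklExp hμ y).sum_range_mul hb2)).add
    (((hasSum_pow_div_gammaMu_mul_thetaFn hμ y).sum_range_mul hθ).mul_left (16 * μ ^ 2))).add
    (((hasSum_pow_div_gammaMu_mul_dunklIndex_sub hμ y).sum_range_mul hb).mul_left 2)).sub
    ((((hasSum_pow_div_gammaMu_mul_thetaFn_mul_dunklIndex_sub hμ y).sum_range_mul hθ).add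
      ((hasSum_pow_div_gammaMu_mul_thetaFn hμ y).sum_range_mul hθb)).mul_left (8 * μ))
  refine h.congr_of_eq (fun i => ?_) (by ring)
  simp only [mul_sum, ← sum_add_distrib, ← sum_sub_distrib]
  refine sum_congr rfl fun j hj => ?_
  obtain ⟨k, rfl⟩ := Nat.exists_eq_add_of_le (Nat.lt_succ_iff.mp (mem_range.mp hj))
  rw [Nat.add_sub_cancel_left, dunklIndex_add]
  linear_combination (16 * μ ^ 2 * (y ^ j / gammaMu μ j) * v k) *
    (thetaFn k ^ 2 * thetaFn_mul_self j + thetaFn j * thetaFn_mul_self k)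

end CauchyProduct

theorem Kop_second_central_moment_general (μ : ℝ) (hμ : 0 ≤ μ) (c : ℕ → ℝ)
    (hQ : ∀ t : ℝ, Summable fun i : ℕ => |c i * t ^ i / gammaMu μ i|)
    (hQ1 : 0 < Qf μ c 1)
    (n : ℕ) (hn : 1 ≤ n) (x : ℝ) (hx : 0 ≤ x) :
    Kop μ c n (fun ξ => (ξ - x) ^ 2) x =
      (1 + 2 * dunklExp μ (-(n * x)) *
            (μ * Qf μ c (-1) + deriv (Qf μ c) 1 - dunklOp μ (Qf μ c) 1) /
            (Qf μ c 1 * dunklExp μ (n * x))) * (x / n) +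
        dunklExp μ (-(n * x)) * dunklOp μ (Qf μ c) 1 /
          (Qf μ c 1 * n ^ 2 * dunklExp μ (n * x)) +
        (2 * deriv (deriv (Qf μ c)) 1 - deriv (dunklOp μ (Qf μ c)) 1 -
            dunklOp μ (deriv (Qf μ c)) 1 + deriv (Qf μ c) 1 - 2 * μ * deriv (Qf μ c) (-1)) *
          (dunklExp μ (n * x) - dunklExp μ (-(n * x))) /
          (Qf μ c 1 * n ^ 2 * dunklExp μ (n * x)) +
        (dunklOp μ (dunklOp μ (Qf μ c)) 1 + 2 * μ * dunklOp μ (Qf μ c) (-1)) /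
          (Qf μ c 1 * n ^ 2) := by
  set a : ℕ → ℝ := fun k => c k / gammaMu μ k
  have ha : ∀ r : ℝ, Summable fun k => ‖a k * r ^ k‖ := fun r =>
    (hQ r).congr fun k => by rw [Real.norm_eq_abs, div_mul_eq_mul_div]
  have hQf : Qf μ c = termwiseDeriv a 0 :=
    funext fun t => tsum_congr fun k => by simp [a]; ring
  have hn0 : (n : ℝ) ≠ 0 := Nat.cast_ne_zero.2 (by omega)
  have hE := (dunklExp_pos hμ (by positivity : 0 ≤ (n : ℝ) * x)).ne'
  have hmoment : HasSum (fun i => qPoly μ c i (n * x) / gammaMu μ i *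
      (((i : ℝ) + 2 * μ * thetaFn i) / n - x) ^ 2) _ :=
    ((hasSum_sum_range_mul_dunklIndex_sub_sq hμ (n * x) (hasSum_termwiseDeriv_zero_one ha)
      (hasSum_mul_thetaFn ha) (hasSum_mul_dunklIndex μ ha)
      (hasSum_mul_thetaFn_mul_dunklIndex μ ha) (hasSum_mul_dunklIndex_sq μ ha)).div_const
      ((n : ℝ) ^ 2)).congr_fun fun i => by
        rw [qPoly_div_gammaMu hμ, sum_mul, sum_div]
        refine sum_congr rfl fun j _ => ?_
        simp only [dunklIndex, a]
        field_simp
  have hderiv : deriv (dunklOp μ (termwiseDeriv a 0)) 1 = _ :=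
    (hasDerivAt_dunklOp μ one_ne_zero (hasDerivAt_termwiseDeriv ha 0)
      (hasDerivAt_termwiseDeriv ha 1 1)).deriv
  simp only [Kop, dunklOp]
  rw [hQf] at hQ1 ⊢
  rw [hmoment.tsum_eq, hderiv, deriv_termwiseDeriv ha, deriv_termwiseDeriv ha]
  field_simp
  ring

/-- the second central moment Ω₂ of K_n^μ. -/
theorem Kop_second_central_moment (μ : ℝ) (hμ : 0 ≤ μ) (c : ℕ → ℝ) (hc0 : c 0 ≠ 0)
    (hQ : ∀ t : ℝ, Summable fun i : ℕ => |c i * t ^ i / gammaMu μ i|)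
    (hq : ∀ i : ℕ, ∀ x : ℝ, 0 ≤ x → 0 ≤ qPoly μ c i x)
    (hQ1 : 0 < Qf μ c 1)
    (n : ℕ) (hn : 1 ≤ n) (x : ℝ) (hx : 0 ≤ x) :
    Kop μ c n (fun ξ => (ξ - x) ^ 2) x =
      (1 + 2 * dunklExp μ (-(n * x)) *
            (μ * Qf μ c (-1) + deriv (Qf μ c) 1 - dunklOp μ (Qf μ c) 1) /
            (Qf μ c 1 * dunklExp μ (n * x))) * (x / n) +
        dunklExp μ (-(n * x)) * dunklOp μ (Qf μ c) 1 /
          (Qf μ c 1 * n ^ 2 * dunklExp μ (n * x)) +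
        (2 * deriv (deriv (Qf μ c)) 1 - deriv (dunklOp μ (Qf μ c)) 1 -
            dunklOp μ (deriv (Qf μ c)) 1 + deriv (Qf μ c) 1 - 2 * μ * deriv (Qf μ c) (-1)) *
          (dunklExp μ (n * x) - dunklExp μ (-(n * x))) /
          (Qf μ c 1 * n ^ 2 * dunklExp μ (n * x)) +
        (dunklOp μ (dunklOp μ (Qf μ c)) 1 + 2 * μ * dunklOp μ (Qf μ c) (-1)) /
          (Qf μ c 1 * n ^ 2) :=
  Kop_second_central_moment_general μ hμ c hQ hQ1 n hn x hx
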